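/- Let X and Y be forests over an alphabet 𝒳 and c a cost function over 𝒳 that is non-negative, self-equal, and conforms to the triangular inequality. For every edit script δ̄ with δ̄(X) = Y, the corresponding tree mapping M_δ̄ (obtained by the recursive construction: M_ε = {(1,1),…,(|X|,|X|)}, replacements leave M unchanged, a deletion at current index j removes the pair with second coordinate j and decrements all larger second coordinates, an insertion at current index j increments all second coordinates ≥ j) is at most as expensive as the script: c(M_δ̄, X, Y) ≤ c(δ̄, X). -/

import Mathlib

/-!
Both costs only see the pre-order label sequences. An effective edit acts on the label sequence
of the current forest as `List.set`, `List.eraseIdx` or `List.insertIdx`, and the mapping is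
reindexed along, so it suffices to bound the growth of the mapping cost in one step by the cost of
the edit. An insertion adds one unmatched node and costs exactly `c(−, y)`. For a replacement or a
deletion at position `j`, let `u` be the label matched to `j`, or `−`: the only term that changes
is `c(u, y_j)`, which becomes `c(u, y)`, resp. `c(u, −)`, and the triangle inequality bounds the
difference by `c(y_j, y)`, resp. `c(y_j, −)`. Self-equality makes the initial identity mapping
free and gives `c(−, −) = 0`, which covers the unmatched case of a deletion.
-/

namespace TED

/-- A tree over an alphabet `α`: a label together with a (possibly empty) list of children. -/
inductive PTree (α : Type) where
  | node : α → List (PTree α) → PTree α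

/-- A forest over `α` is a finite list of trees; `[]` is the empty forest `ε`. -/
abbrev Forest (α : Type) := List (PTree α)

namespace PTree

/-- The label of (the root of) a tree. -/
def label {α : Type} : PTree α → α
  | node a _ => a

/-- The children of (the root of) a tree. -/
def children {α : Type} : PTree α → List (PTree α)
  | node _ cs => cs

mutual
  /-- The number of nodes of a tree. -/
  def size {α : Type} : PTree α → ℕ
    | node _ cs => 1 + sizeL cs
  /-- The number of nodes of a forest. -/
  def sizeL {α : Type} : List (PTree α) → ℕ
    | [] => 0
    | t :: ts => size t + sizeL ts
end

mutual
  /-- The pre-order list of all subtrees of a tree. -/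
  def subtreesT {α : Type} : PTree α → List (PTree α)
    | node a cs => node a cs :: subtreesL cs
  /-- The pre-order list of all subtrees of a forest. -/
  def subtreesL {α : Type} : List (PTree α) → List (PTree α)
    | [] => []
    | t :: ts => subtreesT t ++ subtreesL ts
end

end PTree

open PTree

/-- The pre-order `π(X)` of a forest: the list of all its subtrees. -/
def preorder {α : Type} (F : Forest α) : List (PTree α) := PTree.subtreesL F

/-- The size `|X|` of a forest: the length of its pre-order. -/
def fsize {α : Type} (F : Forest α) : ℕ := (preorder F).length

/-- The `i`-th subtree `x̄_i` (1-indexed pre-order) of a forest, if it exists. -/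
def treeAt {α : Type} (F : Forest α) (i : ℕ) : Option (PTree α) := (preorder F)[i - 1]?

/-- The label `x_i` of the `i`-th subtree, as an element of `𝒳 ∪ {−}`
(`none` plays the role of the gap symbol `−`). -/
def labelAt {α : Type} (F : Forest α) (i : ℕ) : Option α := (treeAt F i).map PTree.label

/-- The number of nodes of the `i`-th subtree `x̄_i`. -/
def sizeAt {α : Type} (F : Forest α) (i : ℕ) : ℕ := ((treeAt F i).map PTree.size).getD 0

/-- A cost function over `α`: a real-valued function on `(𝒳 ∪ {−}) × (𝒳 ∪ {−})`,
where the gap symbol `−` is modelled by `none`. -/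
abbrev Cost (α : Type) := Option α → Option α → ℝ

/-- `c` is non-negative. -/
def Nonneg {α : Type} (c : Cost α) : Prop := ∀ x y, 0 ≤ c x y
/-- `c` is self-equal. -/
def SelfEq {α : Type} (c : Cost α) : Prop := ∀ x, c x x = 0
/-- `c` is discernible. -/
def Discernible {α : Type} (c : Cost α) : Prop := ∀ x y, x ≠ y → 0 < c x y
/-- `c` is symmetric. -/
def Symm {α : Type} (c : Cost α) : Prop := ∀ x y, c x y = c y x
/-- `c` conforms to the triangular inequality. -/
def Triangle {α : Type} (c : Cost α) : Prop := ∀ x y z, c x z ≤ c x y + c y z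

/-- Deletion of the first root: its children are spliced into its place. -/
def delRoot {α : Type} : Forest α → Forest α
  | [] => []
  | PTree.node _ cs :: ts => cs ++ ts

/-- Replacement of the label of the first root by `y`. -/
def repRoot {α : Type} (y : α) : Forest α → Forest α
  | [] => []
  | PTree.node _ cs :: ts => PTree.node y cs :: ts

/-- Insertion of a new root labeled `y` at root level, adopting the trees
`l` to `r-1` of the forest as its children. -/
def insRoot {α : Type} (y : α) (l r : ℕ) (F : Forest α) : Forest α :=
  if r > F.length + 1 ∨ l > r ∨ l < 1 then F
  else if l = r then F.take (l - 1) ++ [PTree.node y []] ++ F.drop (l - 1)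
  else F.take (l - 1) ++ [PTree.node y ((F.drop (l - 1)).take (r - l))] ++ F.drop (r - 1)

/-- `del_i`: deletion of the node with pre-order index `i`. -/
def applyDel {α : Type} : ℕ → Forest α → Forest α
  | _, [] => []
  | i, PTree.node a cs :: ts =>
    if i < 1 then PTree.node a cs :: ts
    else if i = 1 then delRoot (PTree.node a cs :: ts)
    else if i ≤ size (PTree.node a cs) then PTree.node a (applyDel (i - 1) cs) :: ts
    else PTree.node a cs :: applyDel (i - size (PTree.node a cs)) ts
  termination_by _ F => sizeOf F

/-- `rep_{i,y}`: replacement of the label of the node with pre-order index `i` by `y`. -/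
def applyRep {α : Type} (y : α) : ℕ → Forest α → Forest α
  | _, [] => []
  | i, PTree.node a cs :: ts =>
    if i < 1 then PTree.node a cs :: ts
    else if i = 1 then repRoot y (PTree.node a cs :: ts)
    else if i ≤ size (PTree.node a cs) then PTree.node a (applyRep y (i - 1) cs) :: ts
    else PTree.node a cs :: applyRep y (i - size (PTree.node a cs)) ts
  termination_by _ F => sizeOf F

/-- `ins_{i,y,l,r}`: insertion of a node labeled `y` as a child of the node with
pre-order index `i` (at root level if `i = 0`), adopting that node's children
`l` through `r-1` as its children. -/
def applyIns {α : Type} (y : α) (l r : ℕ) : ℕ → Forest α → Forest α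
  | 0, F => insRoot y l r F
  | _ + 1, [] => []
  | i + 1, PTree.node a cs :: ts =>
    if i + 1 ≤ size (PTree.node a cs) then PTree.node a (applyIns y l r i cs) :: ts
    else PTree.node a cs :: applyIns y l r (i + 1 - size (PTree.node a cs)) ts
  termination_by _ F => sizeOf F

/-- The standard edits: deletions `del_i`, replacements `rep_{i,y}` and
insertions `ins_{i,y,l,r}`. -/
inductive Edit (α : Type) where
  | del (i : ℕ)
  | rep (i : ℕ) (y : α)
  | ins (i : ℕ) (y : α) (l r : ℕ)

/-- Application of a single edit to a forest. -/
def Edit.apply {α : Type} : Edit α → Forest α → Forest α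
  | .del i, F => applyDel i F
  | .rep i y, F => applyRep y i F
  | .ins i y l r, F => applyIns y l r i F

/-- Application of an edit script `δ̄ = δ₁,…,δ_T` to a forest (left to right). -/
def applyScript {α : Type} (δ : List (Edit α)) (F : Forest α) : Forest α :=
  δ.foldl (fun F e => e.apply F) F

open Classical in
/-- The cost of a single edit with respect to the forest it is applied to:
`0` if the edit leaves the forest unchanged, and otherwise `c(x_i, y)` for a
replacement, `c(x_i, −)` for a deletion and `c(−, y)` for an insertion. -/
noncomputable def editCost {α : Type} (c : Cost α) (e : Edit α) (F : Forest α) : ℝ :=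
  if e.apply F = F then 0
  else
    match e with
    | .del i => c (labelAt F i) none
    | .rep i y => c (labelAt F i) (some y)
    | .ins _ y _ _ => c none (some y)

/-- The cost `c(δ̄, X)` of an edit script: the sum of the costs of its edits,
each evaluated on the forest to which it is applied. -/
noncomputable def scriptCost {α : Type} (c : Cost α) : List (Edit α) → Forest α → ℝ
  | [], _ => 0
  | e :: es, F => editCost c e F + scriptCost c es (e.apply F)

/-- `x̄_k` is a (proper) ancestor of `x̄_i`, expressed via 1-indexed pre-order indices:
the descendants of `x̄_k` occupy exactly the pre-order indices `k+1, …, k + |x̄_k| - 1`. -/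
def AncestorIdx {α : Type} (F : Forest α) (k i : ℕ) : Prop :=
  k < i ∧ i < k + sizeAt F k

/-- A tree mapping between two forests: a set `M ⊆ {1,…,|F|} × {1,…,|G|}` such that
for all `(i,j), (i',j') ∈ M` we have `i = i' ↔ j = j'`, `i ≤ i' ↔ j ≤ j'`, and
`x̄_i` is an ancestor of `x̄_{i'}` iff `ȳ_j` is an ancestor of `ȳ_{j'}`. -/
def IsTreeMapping {α : Type} (F G : Forest α) (M : Finset (ℕ × ℕ)) : Prop :=
  (∀ p ∈ M, 1 ≤ p.1 ∧ p.1 ≤ fsize F ∧ 1 ≤ p.2 ∧ p.2 ≤ fsize G) ∧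
  (∀ p ∈ M, ∀ q ∈ M,
    (p.1 = q.1 ↔ p.2 = q.2) ∧
    (p.1 ≤ q.1 ↔ p.2 ≤ q.2) ∧
    (AncestorIdx F p.1 q.1 ↔ AncestorIdx G p.2 q.2))

/-- The cost `c(M, X, Y)` of a tree mapping: the sum of the replacement costs of
the mapped pairs, the deletion costs of the unmapped nodes of `X`, and the
insertion costs of the unmapped nodes of `Y`. -/
noncomputable def mapCost {α : Type} (c : Cost α) (F G : Forest α) (M : Finset (ℕ × ℕ)) : ℝ :=
  (∑ p ∈ M, c (labelAt F p.1) (labelAt G p.2))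
  + (∑ i ∈ (Finset.Icc 1 (fsize F)).filter (fun i => ∀ p ∈ M, p.1 ≠ i), c (labelAt F i) none)
  + (∑ j ∈ (Finset.Icc 1 (fsize G)).filter (fun j => ∀ p ∈ M, p.2 ≠ j), c none (labelAt G j))

/-- A co-optimal tree mapping: a tree mapping of minimum cost. -/
def IsCoOptimal {α : Type} (c : Cost α) (F G : Forest α) (M : Finset (ℕ × ℕ)) : Prop :=
  IsTreeMapping F G M ∧
  ∀ M' : Finset (ℕ × ℕ), IsTreeMapping F G M' → mapCost c F G M ≤ mapCost c F G M'

/-- The pre-order index (in the output forest) of the node inserted by the edit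
`ins_{i,y,l,r}` applied to `F`. -/
def insPos {α : Type} (F : Forest α) (i l : ℕ) : ℕ :=
  if i = 0 then PTree.sizeL (F.take (l - 1)) + 1
  else
    match treeAt F i with
    | some t => i + PTree.sizeL (t.children.take (l - 1)) + 1
    | none => 0

open Classical in
/-- One step of the recursive construction of the mapping corresponding to an edit
script: `F` is the forest to which the edit `e` is applied, and `M` is the mapping
constructed for the preceding edits. Replacements (and ineffective edits) leave the
mapping unchanged; a deletion of the node with current pre-order index `j` removes
the pair with second coordinate `j` and decrements all larger second coordinates;
an insertion at current pre-order position `j` increments all second coordinates `≥ j`. -/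
noncomputable def stepMap {α : Type} (F : Forest α) (e : Edit α) (M : Finset (ℕ × ℕ)) :
    Finset (ℕ × ℕ) :=
  if e.apply F = F then M
  else
    match e with
    | .rep _ _ => M
    | .del j =>
        (M.filter (fun p => p.2 < j)) ∪
          ((M.filter (fun p => j < p.2)).image (fun p => (p.1, p.2 - 1)))
    | .ins i _ l _ =>
        (M.filter (fun p => p.2 < insPos F i l)) ∪
          ((M.filter (fun p => insPos F i l ≤ p.2)).image (fun p => (p.1, p.2 + 1)))

/-- The mapping `M_δ̄` corresponding to an edit script `δ̄` applied to a forest `F`: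
start with the identity mapping `{(1,1),…,(|F|,|F|)}` and update it edit by edit. -/
noncomputable def mapOfScript {α : Type} (δ : List (Edit α)) (F : Forest α) : Finset (ℕ × ℕ) :=
  (δ.foldl (fun st e => (e.apply st.1, stepMap st.1 e st.2))
    (F, (Finset.Icc 1 (fsize F)).image (fun i => (i, i)))).2

open Finset

theorem _root_.List.insertIdx_append_of_le_length {β : Type*} (y : β) :
    ∀ (A B : List β) (n : ℕ), n ≤ A.length → (A ++ B).insertIdx n y = A.insertIdx n y ++ B
  | _, _, 0, _ => rfl
  | [], _, _ + 1, h => by simp at h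
  | a :: A, B, n + 1, h => by
      simp only [List.cons_append, List.insertIdx_succ_cons]
      rw [insertIdx_append_of_le_length y A B n (by simpa using h)]

theorem _root_.List.insertIdx_length_add_append {β : Type*} (y : β) :
    ∀ (A B : List β) (n : ℕ), (A ++ B).insertIdx (A.length + n) y = A ++ B.insertIdx n y
  | [], _, _ => by simp
  | a :: A, B, n => by
      rw [List.cons_append, List.length_cons, Nat.add_right_comm, List.insertIdx_succ_cons,
        insertIdx_length_add_append y A B n, List.cons_append]

section Labels

variable {α : Type}

theorem subtreesL_append : ∀ A B : Forest α, subtreesL (A ++ B) = subtreesL A ++ subtreesL B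
  | [], _ => rfl
  | t :: A, B => by
      rw [List.cons_append, subtreesL, subtreesL, subtreesL_append A B, List.append_assoc]

theorem length_subtreesL : ∀ F : Forest α, (subtreesL F).length = sizeL F
  | [] => rfl
  | node a cs :: ts => by
      rw [subtreesL, subtreesT, sizeL, size, List.length_append, List.length_cons,
        length_subtreesL cs, length_subtreesL ts]
      omega
  termination_by F => sizeOf F

theorem length_subtreesT (t : PTree α) : (subtreesT t).length = size t := by
  obtain ⟨a, cs⟩ := t
  rw [subtreesT, size, List.length_cons, length_subtreesL]
  omega

theorem fsize_eq_sizeL (F : Forest α) : fsize F = sizeL F :=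
  length_subtreesL F

theorem size_node (a : α) (cs : Forest α) : size (node a cs) = 1 + fsize cs := by
  rw [size, fsize_eq_sizeL]

theorem fsize_cons (a : α) (cs ts : Forest α) :
    fsize (node a cs :: ts) = 1 + fsize cs + fsize ts := by
  rw [fsize_eq_sizeL, sizeL, ← size_node, fsize_eq_sizeL]

def labels (F : Forest α) : List α := (preorder F).map label

theorem labels_cons (a : α) (cs ts : Forest α) :
    labels (node a cs :: ts) = a :: (labels cs ++ labels ts) := by
  simp [labels, preorder, subtreesL, subtreesT, label]

theorem labels_append (A B : Forest α) : labels (A ++ B) = labels A ++ labels B := by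
  simp [labels, preorder, subtreesL_append]

theorem length_labels (F : Forest α) : (labels F).length = fsize F :=
  List.length_map _

theorem labelAt_eq_getElem? (F : Forest α) (j : ℕ) : labelAt F j = (labels F)[j - 1]? :=
  (List.getElem?_map ..).symm

theorem applyRep_eq_self (y : α) :
    ∀ (j : ℕ) (F : Forest α), j ∉ Icc 1 (fsize F) → applyRep y j F = F
  | j, [], _ => by rw [applyRep]
  | j, node a cs :: ts, hj => by
      rw [mem_Icc, fsize_cons] at hj
      have := size_node a cs
      rw [applyRep]
      by_cases hj0 : j < 1
      · rw [if_pos hj0]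
      · rw [if_neg hj0, if_neg (by omega), if_neg (by omega),
          applyRep_eq_self y _ ts (by rw [mem_Icc]; omega)]
  termination_by _ F => sizeOf F

theorem applyDel_eq_self : ∀ (j : ℕ) (F : Forest α), j ∉ Icc 1 (fsize F) → applyDel j F = F
  | j, [], _ => by rw [applyDel]
  | j, node a cs :: ts, hj => by
      rw [mem_Icc, fsize_cons] at hj
      have := size_node a cs
      rw [applyDel]
      by_cases hj0 : j < 1
      · rw [if_pos hj0]
      · rw [if_neg hj0, if_neg (by omega), if_neg (by omega),
          applyDel_eq_self _ ts (by rw [mem_Icc]; omega)]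
  termination_by _ F => sizeOf F

theorem labels_applyRep (y : α) :
    ∀ (j : ℕ) (F : Forest α), j ∈ Icc 1 (fsize F) →
      labels (applyRep y j F) = (labels F).set (j - 1) y
  | j, [], hj => by simp [fsize, preorder, subtreesL] at hj
  | j, node a cs :: ts, hj => by
      rw [mem_Icc, fsize_cons] at hj
      have := size_node a cs
      have := length_labels cs
      rw [applyRep, if_neg (by omega)]
      by_cases hj1 : j = 1
      · subst hj1
        rw [if_pos rfl, repRoot, labels_cons, labels_cons]
        rfl
      obtain ⟨k, rfl⟩ : ∃ k, j = k + 2 := ⟨j - 2, by omega⟩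
      rw [if_neg hj1, labels_cons, show k + 2 - 1 = k + 1 by omega, List.set_cons_succ,
        List.set_append]
      by_cases hjc : k + 2 ≤ size (node a cs)
      · rw [if_pos hjc, labels_cons, labels_applyRep y _ cs (by rw [mem_Icc]; omega),
          if_pos (by omega), Nat.add_sub_cancel]
      · rw [if_neg hjc, labels_cons,
          labels_applyRep y _ ts (by rw [mem_Icc]; omega), if_neg (by omega)]
        congr 3
        omega
  termination_by _ F => sizeOf F

theorem labels_applyDel :
    ∀ (j : ℕ) (F : Forest α), j ∈ Icc 1 (fsize F) →
      labels (applyDel j F) = (labels F).eraseIdx (j - 1)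
  | j, [], hj => by simp [fsize, preorder, subtreesL] at hj
  | j, node a cs :: ts, hj => by
      rw [mem_Icc, fsize_cons] at hj
      have := size_node a cs
      have := length_labels cs
      rw [applyDel, if_neg (by omega)]
      by_cases hj1 : j = 1
      · subst hj1
        rw [if_pos rfl, delRoot, labels_append, labels_cons]
        rfl
      obtain ⟨k, rfl⟩ : ∃ k, j = k + 2 := ⟨j - 2, by omega⟩
      rw [if_neg hj1, labels_cons, show k + 2 - 1 = k + 1 by omega, List.eraseIdx_cons_succ]
      by_cases hjc : k + 2 ≤ size (node a cs)
      · rw [if_pos hjc, labels_cons, labels_applyDel _ cs (by rw [mem_Icc]; omega),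
          List.eraseIdx_append_of_lt_length (by omega), Nat.add_sub_cancel]
      · rw [if_neg hjc, labels_cons, labels_applyDel _ ts (by rw [mem_Icc]; omega),
          List.eraseIdx_append_of_length_le (by omega)]
        congr 3
        omega
  termination_by _ F => sizeOf F

theorem labels_applyRep_of_ne {y : α} {j : ℕ} {F : Forest α} (h : applyRep y j F ≠ F) :
    j ∈ Icc 1 (fsize F) ∧ labels (applyRep y j F) = (labels F).set (j - 1) y :=
  have hj := by_contra fun hj => h (applyRep_eq_self y j F hj)
  ⟨hj, labels_applyRep y j F hj⟩

theorem labels_applyDel_of_ne {j : ℕ} {F : Forest α} (h : applyDel j F ≠ F) :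
    j ∈ Icc 1 (fsize F) ∧ labels (applyDel j F) = (labels F).eraseIdx (j - 1) :=
  have hj := by_contra fun hj => h (applyDel_eq_self j F hj)
  ⟨hj, labels_applyDel j F hj⟩

theorem treeAt_cons_succ_of_le (a : α) (cs ts : Forest α) {i : ℕ} (hi : i ∈ Icc 1 (fsize cs)) :
    treeAt (node a cs :: ts) (i + 1) = treeAt cs i := by
  rw [mem_Icc] at hi
  obtain ⟨k, rfl⟩ : ∃ k, i = k + 1 := ⟨i - 1, by omega⟩
  rw [treeAt, treeAt, preorder, preorder, subtreesL, subtreesT, List.cons_append,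
    Nat.add_sub_cancel, List.getElem?_cons_succ, Nat.add_sub_cancel, List.getElem?_append_left]
  rw [length_subtreesL, ← fsize_eq_sizeL]
  omega

theorem treeAt_cons_succ_of_ge (t : PTree α) (ts : Forest α) {i : ℕ} (hi : size t ≤ i) :
    treeAt (t :: ts) (i + 1) = treeAt ts (i + 1 - size t) := by
  rw [treeAt, treeAt, preorder, preorder, subtreesL, Nat.add_sub_cancel,
    List.getElem?_append_right (by rw [length_subtreesT]; omega), length_subtreesT]
  congr 1
  omega

theorem insPos_eq_add_of_treeAt_eq {F G : Forest α} {i i' k l : ℕ} (hi' : i' ≠ 0)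
    (hk : i = i' + k) (ht : treeAt F i = treeAt G i') (hpos : insPos G i' l ≠ 0) :
    insPos F i l = insPos G i' l + k := by
  rw [insPos, if_neg hi'] at hpos
  rw [insPos, insPos, if_neg (by omega), if_neg hi', ht]
  rcases hG : treeAt G i' with _ | t
  · rw [hG] at hpos
    exact absurd rfl hpos
  · simp only
    omega

theorem insRoot_eq {y : α} {l r : ℕ} {F : Forest α} (h : insRoot y l r F ≠ F) :
    1 ≤ l ∧ l ≤ r ∧ r ≤ F.length + 1 ∧
      insRoot y l r F
        = F.take (l - 1) ++ node y ((F.drop (l - 1)).take (r - l)) :: F.drop (r - 1) := by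
  rw [insRoot] at h ⊢
  split_ifs at h ⊢ with hout hlr
  · exact absurd rfl h
  · subst hlr
    simp only [Nat.sub_self, List.take_zero, List.singleton_append, List.append_assoc, and_true]
    omega
  · simp only [List.singleton_append, List.append_assoc, and_true]
    omega

theorem labels_insRoot (y : α) (l r : ℕ) (F : Forest α) (h : insRoot y l r F ≠ F) :
    insPos F 0 l ∈ Icc 1 (fsize F + 1) ∧
      labels (insRoot y l r F) = (labels F).insertIdx (insPos F 0 l - 1) y := by
  obtain ⟨hl, hlr, hr, hins⟩ := insRoot_eq h
  have hsplit : F.take (l - 1) ++ ((F.drop (l - 1)).take (r - l) ++ F.drop (r - 1)) = F := by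
    rw [show r - 1 = (l - 1) + (r - l) by omega, ← List.drop_drop, List.take_append_drop,
      List.take_append_drop]
  have hlabels : labels F = labels (F.take (l - 1)) ++
      (labels ((F.drop (l - 1)).take (r - l)) ++ labels (F.drop (r - 1))) := by
    rw [← labels_append, ← labels_append, hsplit]
  have hpos : insPos F 0 l - 1 = (labels (F.take (l - 1))).length + 0 := by
    rw [insPos, if_pos rfl, length_labels, fsize_eq_sizeL]
    rfl
  refine ⟨?_, ?_⟩
  · have := congrArg List.length hlabels
    rw [List.length_append, List.length_append, length_labels, length_labels] at this
    rw [insPos, if_pos rfl, mem_Icc, ← fsize_eq_sizeL]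
    omega
  · rw [hins, hpos, hlabels, List.insertIdx_length_add_append, List.insertIdx_zero, labels_append,
      labels_cons]

theorem insPos_cons_succ_of_le (a : α) (cs ts : Forest α) {i l : ℕ}
    (hi : i + 1 ≤ size (node a cs)) (hpos : insPos cs i l ≠ 0) :
    insPos (node a cs :: ts) (i + 1) l = insPos cs i l + 1 := by
  rcases Nat.eq_zero_or_pos i with rfl | hi0
  · simp [insPos, treeAt, preorder, subtreesL, subtreesT, children]
    omega
  · rw [size_node] at hi
    exact insPos_eq_add_of_treeAt_eq (by omega) rfl
      (treeAt_cons_succ_of_le a cs ts (by rw [mem_Icc]; omega)) hpos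

theorem insPos_cons_succ_of_ge (t : PTree α) (ts : Forest α) {i l : ℕ} (hi : size t ≤ i)
    (hpos : insPos ts (i + 1 - size t) l ≠ 0) :
    insPos (t :: ts) (i + 1) l = insPos ts (i + 1 - size t) l + size t :=
  insPos_eq_add_of_treeAt_eq (by omega) (by omega) (treeAt_cons_succ_of_ge t ts hi) hpos

theorem labels_applyIns (y : α) (l r : ℕ) : ∀ (i : ℕ) (F : Forest α), applyIns y l r i F ≠ F →
    insPos F i l ∈ Icc 1 (fsize F + 1) ∧
      labels (applyIns y l r i F) = (labels F).insertIdx (insPos F i l - 1) y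
  | 0, F, h => by
      rw [applyIns] at h ⊢
      exact labels_insRoot y l r F h
  | i + 1, [], h => by
      rw [applyIns] at h
      exact absurd rfl h
  | i + 1, node a cs :: ts, h => by
      have := fsize_cons a cs ts
      have := length_labels cs
      rw [applyIns] at h ⊢
      split_ifs at h ⊢ with hc
      · obtain ⟨hmem, hlab⟩ := labels_applyIns y l r i cs fun he => h (by rw [he])
        rw [mem_Icc] at hmem
        rw [insPos_cons_succ_of_le a cs ts hc (by omega), mem_Icc, labels_cons, labels_cons, hlab,
          Nat.add_sub_cancel, show insPos cs i l = insPos cs i l - 1 + 1 by omega,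
          Nat.add_sub_cancel, List.insertIdx_succ_cons,
          List.insertIdx_append_of_le_length _ _ _ _ (by omega)]
        exact ⟨by omega, rfl⟩
      · obtain ⟨hmem, hlab⟩ := labels_applyIns y l r _ ts fun he => h (by rw [he])
        rw [mem_Icc] at hmem
        have := size_node a cs
        rw [insPos_cons_succ_of_ge _ ts (by omega) (by omega), mem_Icc, labels_cons, labels_cons,
          hlab, show insPos ts (i + 1 - size (node a cs)) l + size (node a cs) - 1
            = (labels cs).length + (insPos ts (i + 1 - size (node a cs)) l - 1) + 1 by omega,
          List.insertIdx_succ_cons, List.insertIdx_length_add_append]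
        exact ⟨by omega, rfl⟩
  termination_by _ F => sizeOf F

end Labels

section Matching

variable {α : Type}

/-- The invariant carried along the script: of the tree-mapping conditions, only these enter
the cost. -/
structure IsPartialMatching (m n : ℕ) (M : Finset (ℕ × ℕ)) : Prop where
  fst_mem : ∀ p ∈ M, p.1 ∈ Icc 1 m
  snd_mem : ∀ p ∈ M, p.2 ∈ Icc 1 n
  injOn_fst : Set.InjOn Prod.fst (M : Set (ℕ × ℕ))
  injOn_snd : Set.InjOn Prod.snd (M : Set (ℕ × ℕ))

theorem isPartialMatching_diag (n : ℕ) :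
    IsPartialMatching n n ((Icc 1 n).image fun i => (i, i)) := by
  refine ⟨?_, ?_, ?_, ?_⟩ <;>
    simp only [forall_mem_image, coe_image, Set.InjOn, Set.forall_mem_image]
  all_goals simp +contextual

theorem IsPartialMatching.mono {m n : ℕ} {M N : Finset (ℕ × ℕ)} (hM : IsPartialMatching m n M)
    (hNM : N ⊆ M) : IsPartialMatching m n N :=
  ⟨fun p hp => hM.fst_mem p (hNM hp), fun p hp => hM.snd_mem p (hNM hp),
    hM.injOn_fst.mono (by simpa using hNM), hM.injOn_snd.mono (by simpa using hNM)⟩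

theorem IsPartialMatching.image_snd {m n n' : ℕ} {M : Finset (ℕ × ℕ)}
    (hM : IsPartialMatching m n M) {σ : ℕ → ℕ}
    (hσ : Set.InjOn σ (Prod.snd '' (M : Set (ℕ × ℕ)))) (hmaps : ∀ p ∈ M, σ p.2 ∈ Icc 1 n') :
    IsPartialMatching m n' (M.image (Prod.map id σ)) := by
  refine ⟨?_, ?_, ?_, ?_⟩ <;>
    simp only [forall_mem_image, coe_image, Set.InjOn, Set.forall_mem_image]
  · exact hM.fst_mem
  · exact hmaps
  · intro p hp q hq h
    rw [hM.injOn_fst hp hq h]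
  · intro p hp q hq h
    rw [hM.injOn_snd hp hq (hσ (Set.mem_image_of_mem _ hp) (Set.mem_image_of_mem _ hq) h)]

-- Reindexing of 1-based positions after inserting at, resp. deleting, position `j`.
def shiftUp (j k : ℕ) : ℕ := if k < j then k else k + 1

def shiftDown (j k : ℕ) : ℕ := if k < j then k else k - 1

theorem shiftUp_injective (j : ℕ) : Function.Injective (shiftUp j) := by
  intro a b h
  unfold shiftUp at h
  split_ifs at h <;> omega

theorem shiftUp_ne (j k : ℕ) : shiftUp j k ≠ j := by
  unfold shiftUp
  split_ifs <;> omega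

theorem shiftUp_shiftDown {j k : ℕ} (hk : k ≠ j) : shiftUp j (shiftDown j k) = k := by
  unfold shiftUp shiftDown
  split_ifs <;> omega

theorem Icc_succ_eq_insert_image_shiftUp {j n : ℕ} (hj : j ∈ Icc 1 (n + 1)) :
    Icc 1 (n + 1) = insert j ((Icc 1 n).image (shiftUp j)) := by
  ext k
  simp only [mem_insert, mem_image, mem_Icc] at hj ⊢
  constructor
  · intro hk
    by_cases hkj : k = j
    · exact Or.inl hkj
    · refine Or.inr ⟨shiftDown j k, ?_, shiftUp_shiftDown hkj⟩
      unfold shiftDown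
      split_ifs <;> omega
  · rintro (rfl | ⟨k, hk, rfl⟩)
    · exact hj
    · unfold shiftUp
      split_ifs <;> omega

theorem getElem?_insertIdx_shiftUp (L : List α) (y : α) {j k : ℕ} (hj : 1 ≤ j) (hk : 1 ≤ k) :
    (L.insertIdx (j - 1) y)[shiftUp j k - 1]? = L[k - 1]? := by
  unfold shiftUp
  split_ifs with hkj
  · exact List.getElem?_insertIdx_of_lt (by omega)
  · rw [List.getElem?_insertIdx_of_gt (by omega)]
    rfl

def insertSnd (j : ℕ) (M : Finset (ℕ × ℕ)) : Finset (ℕ × ℕ) :=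
  M.image (Prod.map id (shiftUp j))

def eraseSnd (j : ℕ) (M : Finset (ℕ × ℕ)) : Finset (ℕ × ℕ) :=
  (M.filter fun p => p.2 ≠ j).image (Prod.map id (shiftDown j))

theorem insertSnd_eraseSnd (j : ℕ) (M : Finset (ℕ × ℕ)) :
    insertSnd j (eraseSnd j M) = M.filter fun p => p.2 ≠ j := by
  rw [insertSnd, eraseSnd, image_image]
  refine (image_congr fun p hp => ?_).trans image_id
  exact Prod.ext rfl (shiftUp_shiftDown (mem_filter.mp (mem_coe.mp hp)).2)

theorem IsPartialMatching.insertSnd {m n : ℕ} {M : Finset (ℕ × ℕ)}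
    (hM : IsPartialMatching m n M) (j : ℕ) : IsPartialMatching m (n + 1) (insertSnd j M) :=
  hM.image_snd (shiftUp_injective j).injOn fun p hp => by
    have := mem_Icc.mp (hM.snd_mem p hp)
    unfold shiftUp
    split_ifs <;> simp <;> omega

theorem IsPartialMatching.eraseSnd {m n : ℕ} {M : Finset (ℕ × ℕ)}
    (hM : IsPartialMatching m n M) {j : ℕ} (hj : j ∈ Icc 1 n) :
    IsPartialMatching m (n - 1) (eraseSnd j M) := by
  refine (hM.mono (filter_subset _ M)).image_snd ?_ fun p hp => ?_
  · refine Set.LeftInvOn.injOn (f₁' := shiftUp j) fun k hk => shiftUp_shiftDown ?_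
    obtain ⟨p, hp, rfl⟩ := hk
    exact (mem_filter.mp hp).2
  · have := mem_Icc.mp (hM.snd_mem p (mem_filter.mp hp).1)
    have := mem_Icc.mp hj
    have := (mem_filter.mp hp).2
    unfold shiftDown
    split_ifs <;> simp <;> omega

theorem IsPartialMatching.filter_snd_ne_eq_erase {m n : ℕ} {M : Finset (ℕ × ℕ)}
    (hM : IsPartialMatching m n M) {p : ℕ × ℕ} (hp : p ∈ M) :
    (M.filter fun q => q.2 ≠ p.2) = M.erase p := by
  ext q
  simp only [mem_filter, mem_erase]
  exact ⟨fun ⟨hq, hne⟩ => ⟨fun h => hne (h ▸ rfl), hq⟩,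
    fun ⟨hne, hq⟩ => ⟨hq, fun h => hne (hM.injOn_snd hq hp h)⟩⟩

theorem filter_union_image_eq_eraseSnd (j : ℕ) (M : Finset (ℕ × ℕ)) :
    M.filter (fun p => p.2 < j) ∪ (M.filter fun p => j < p.2).image (fun p => (p.1, p.2 - 1))
      = eraseSnd j M := by
  ext ⟨a, b⟩
  simp only [eraseSnd, mem_union, mem_filter, mem_image, Prod.exists, Prod.map_apply, id_eq,
    Prod.mk.injEq, shiftDown]
  constructor
  · rintro (⟨h, hb⟩ | ⟨a', b', ⟨h, hb⟩, rfl, rfl⟩)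
    · exact ⟨a, b, ⟨h, by omega⟩, rfl, if_pos hb⟩
    · exact ⟨a', b', ⟨h, by omega⟩, rfl, if_neg (by omega)⟩
  · rintro ⟨a', b', ⟨h, hb⟩, rfl, rfl⟩
    split_ifs with hlt
    · exact Or.inl ⟨h, hlt⟩
    · exact Or.inr ⟨a', b', ⟨h, by omega⟩, rfl, rfl⟩

theorem filter_union_image_eq_insertSnd (j : ℕ) (M : Finset (ℕ × ℕ)) :
    M.filter (fun p => p.2 < j) ∪ (M.filter fun p => j ≤ p.2).image (fun p => (p.1, p.2 + 1))
      = insertSnd j M := by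
  ext ⟨a, b⟩
  simp only [insertSnd, mem_union, mem_filter, mem_image, Prod.exists, Prod.map_apply, id_eq,
    Prod.mk.injEq, shiftUp]
  constructor
  · rintro (⟨h, hb⟩ | ⟨a', b', ⟨h, hb⟩, rfl, rfl⟩)
    · exact ⟨a, b, h, rfl, if_pos hb⟩
    · exact ⟨a', b', h, rfl, if_neg (by omega)⟩
  · rintro ⟨a', b', h, rfl, rfl⟩
    split_ifs with hlt
    · exact Or.inl ⟨h, hlt⟩
    · exact Or.inr ⟨a', b', ⟨h, by omega⟩, rfl, rfl⟩

theorem filter_forall_ne_erase {f : ℕ × ℕ → ℕ} {M : Finset (ℕ × ℕ)} {p : ℕ × ℕ} {s : Finset ℕ}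
    (hf : Set.InjOn f (M : Set (ℕ × ℕ))) (hp : p ∈ M) (hps : f p ∈ s) :
    s.filter (fun i => ∀ q ∈ M.erase p, f q ≠ i)
      = insert (f p) (s.filter (fun i => ∀ q ∈ M, f q ≠ i)) := by
  ext i
  simp only [mem_filter, mem_insert, mem_erase]
  constructor
  · rintro ⟨hi, hne⟩
    by_cases hip : f p = i
    · exact Or.inl hip.symm
    · refine Or.inr ⟨hi, fun q hq hqi => ?_⟩
      by_cases hqp : q = p
      · exact hip (hqp ▸ hqi)
      · exact hne q ⟨hqp, hq⟩ hqi
  · rintro (rfl | ⟨hi, hne⟩)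
    · exact ⟨hps, fun q ⟨hqp, hq⟩ hqi => hqp (hf hq hp hqi)⟩
    · exact ⟨hi, fun q ⟨_, hq⟩ => hne q hq⟩

noncomputable def matchingCost (c : Cost α) (K L : List α) (M : Finset (ℕ × ℕ)) : ℝ :=
  (∑ p ∈ M, c K[p.1 - 1]? L[p.2 - 1]?)
  + (∑ i ∈ (Icc 1 K.length).filter (fun i => ∀ p ∈ M, p.1 ≠ i), c K[i - 1]? none)
  + (∑ j ∈ (Icc 1 L.length).filter (fun j => ∀ p ∈ M, p.2 ≠ j), c none L[j - 1]?)

theorem matchingCost_insertIdx (c : Cost α) (K L : List α) {M : Finset (ℕ × ℕ)}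
    (hM : IsPartialMatching K.length L.length M) {j : ℕ} (hj : j ∈ Icc 1 (L.length + 1))
    (y : α) :
    matchingCost c K (L.insertIdx (j - 1) y) (insertSnd j M)
      = matchingCost c K L M + c none (some y) := by
  have hj1 : 1 ≤ j := (mem_Icc.mp hj).1
  have hinj : Set.InjOn (Prod.map id (shiftUp j)) (M : Set (ℕ × ℕ)) :=
    (Function.injective_id.prodMap (shiftUp_injective j)).injOn
  have hlen : (L.insertIdx (j - 1) y).length = L.length + 1 :=
    List.length_insertIdx_of_le_length (by simp at hj; omega) y
  rw [insertSnd]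
  have hpairs : ∑ p ∈ M.image (Prod.map id (shiftUp j)),
      c K[p.1 - 1]? (L.insertIdx (j - 1) y)[p.2 - 1]? = ∑ p ∈ M, c K[p.1 - 1]? L[p.2 - 1]? := by
    rw [sum_image hinj]
    refine sum_congr rfl fun p hp => ?_
    simp only [Prod.map_fst, Prod.map_snd, id]
    rw [getElem?_insertIdx_shiftUp L y hj1 (mem_Icc.mp (hM.snd_mem p hp)).1]
  have hgapsK : (Icc 1 K.length).filter (fun i => ∀ q ∈ M.image (Prod.map id (shiftUp j)), q.1 ≠ i)
      = (Icc 1 K.length).filter (fun i => ∀ p ∈ M, p.1 ≠ i) := by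
    simp only [forall_mem_image, Prod.map_fst, id]
  have hgapsL : (Icc 1 (L.length + 1)).filter
        (fun k => ∀ q ∈ M.image (Prod.map id (shiftUp j)), q.2 ≠ k)
      = insert j (((Icc 1 L.length).filter (fun k => ∀ p ∈ M, p.2 ≠ k)).image (shiftUp j)) := by
    rw [Icc_succ_eq_insert_image_shiftUp hj, filter_insert, filter_image]
    simp only [forall_mem_image, Prod.map_snd, (shiftUp_injective j).ne_iff]
    simp [shiftUp_ne]
  have hj_notMem : j ∉ ((Icc 1 L.length).filter (fun k => ∀ p ∈ M, p.2 ≠ k)).image (shiftUp j) := by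
    simp [shiftUp_ne]
  rw [matchingCost, matchingCost, hpairs, hgapsK, hlen, hgapsL, sum_insert hj_notMem,
    sum_image (shiftUp_injective j).injOn, List.getElem?_insertIdx_self,
    if_pos (by simp at hj; omega)]
  have hgapsL' : ∑ k ∈ (Icc 1 L.length).filter (fun k => ∀ p ∈ M, p.2 ≠ k),
      c none (L.insertIdx (j - 1) y)[shiftUp j k - 1]?
      = ∑ k ∈ (Icc 1 L.length).filter (fun k => ∀ p ∈ M, p.2 ≠ k), c none L[k - 1]? :=
    sum_congr rfl fun k hk => by
      rw [getElem?_insertIdx_shiftUp L y hj1 (mem_Icc.mp (mem_filter.mp hk).1).1]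
  rw [hgapsL']
  ring

theorem matchingCost_erase (c : Cost α) (K L : List α) {M : Finset (ℕ × ℕ)}
    (hM : IsPartialMatching K.length L.length M) {p : ℕ × ℕ} (hp : p ∈ M) :
    matchingCost c K L M + c K[p.1 - 1]? none + c none L[p.2 - 1]?
      = matchingCost c K L (M.erase p) + c K[p.1 - 1]? L[p.2 - 1]? := by
  have hK : p.1 ∉ (Icc 1 K.length).filter (fun i => ∀ q ∈ M, q.1 ≠ i) :=
    fun h => (mem_filter.mp h).2 p hp rfl
  have hL : p.2 ∉ (Icc 1 L.length).filter (fun j => ∀ q ∈ M, q.2 ≠ j) :=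
    fun h => (mem_filter.mp h).2 p hp rfl
  rw [matchingCost, matchingCost, ← add_sum_erase M _ hp,
    filter_forall_ne_erase hM.injOn_fst hp (hM.fst_mem p hp), sum_insert hK,
    filter_forall_ne_erase hM.injOn_snd hp (hM.snd_mem p hp), sum_insert hL]
  ring

-- `u` is the label matched to position `j`, or `none` if `j` is unmatched.
theorem matchingCost_set (c : Cost α) (hse : SelfEq c) (K L : List α) {M : Finset (ℕ × ℕ)}
    (hM : IsPartialMatching K.length L.length M) {j : ℕ} (hj : j ∈ Icc 1 L.length) :
    ∃ u, ∀ y, matchingCost c K (L.set (j - 1) y) M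
      = matchingCost c K (L.eraseIdx (j - 1)) (eraseSnd j M) + c u (some y) - c u none := by
  have hj' := mem_Icc.mp hj
  have hlen : (L.eraseIdx (j - 1)).length = L.length - 1 := List.length_eraseIdx_of_lt (by omega)
  have hunmatch : ∀ y, matchingCost c K (L.set (j - 1) y) (M.filter fun p => p.2 ≠ j)
      = matchingCost c K (L.eraseIdx (j - 1)) (eraseSnd j M) + c none (some y) := fun y => by
    rw [← List.insertIdx_eraseIdx_self (by omega), ← insertSnd_eraseSnd]
    exact matchingCost_insertIdx c K _ (hlen ▸ hM.eraseSnd hj) (by rw [hlen, mem_Icc]; omega) y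
  by_cases hmatched : ∃ p ∈ M, p.2 = j
  · obtain ⟨p, hp, rfl⟩ := hmatched
    refine ⟨K[p.1 - 1]?, fun y => ?_⟩
    have hM' : IsPartialMatching K.length (L.set (p.2 - 1) y).length M := by
      rwa [List.length_set]
    have herase := matchingCost_erase c K (L.set (p.2 - 1) y) hM' hp
    rw [List.getElem?_set_self (by omega), ← hM.filter_snd_ne_eq_erase hp] at herase
    linarith [hunmatch y]
  · push Not at hmatched
    refine ⟨none, fun y => ?_⟩
    have hunmatch_y := hunmatch y
    rw [filter_true_of_mem hmatched] at hunmatch_y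
    rw [hunmatch_y, hse none]
    ring

theorem matchingCost_set_le (c : Cost α) (hse : SelfEq c) (htr : Triangle c) (K L : List α)
    {M : Finset (ℕ × ℕ)} (hM : IsPartialMatching K.length L.length M) {j : ℕ}
    (hj : j ∈ Icc 1 L.length) (y : α) :
    matchingCost c K (L.set (j - 1) y) M ≤ matchingCost c K L M + c L[j - 1]? (some y) := by
  have hj' : j - 1 < L.length := by simp at hj; omega
  obtain ⟨u, hu⟩ := matchingCost_set c hse K L hM hj
  have hself := hu L[j - 1]
  rw [List.set_getElem_self] at hself
  rw [hu y, hself, List.getElem?_eq_getElem hj']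
  linarith [htr u (some L[j - 1]) (some y)]

theorem matchingCost_eraseIdx_le (c : Cost α) (hse : SelfEq c) (htr : Triangle c) (K L : List α)
    {M : Finset (ℕ × ℕ)} (hM : IsPartialMatching K.length L.length M) {j : ℕ}
    (hj : j ∈ Icc 1 L.length) :
    matchingCost c K (L.eraseIdx (j - 1)) (eraseSnd j M)
      ≤ matchingCost c K L M + c L[j - 1]? none := by
  have hj' : j - 1 < L.length := by simp at hj; omega
  obtain ⟨u, hu⟩ := matchingCost_set c hse K L hM hj
  have hself := hu L[j - 1]
  rw [List.set_getElem_self] at hself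
  rw [hself, List.getElem?_eq_getElem hj']
  linarith [htr u (some L[j - 1]) none]

theorem matchingCost_diag (c : Cost α) (hse : SelfEq c) (K : List α) :
    matchingCost c K K ((Icc 1 K.length).image fun i => (i, i)) = 0 := by
  set D := (Icc 1 K.length).image fun i => (i, i)
  have hgaps (f : ℕ × ℕ → ℕ) (hf : ∀ i, f (i, i) = i) :
      (Icc 1 K.length).filter (fun i => ∀ p ∈ D, f p ≠ i) = ∅ :=
    filter_eq_empty_iff.mpr fun i hi h => h (i, i) (mem_image_of_mem _ hi) (hf i)
  rw [matchingCost, hgaps Prod.fst fun _ => rfl, hgaps Prod.snd fun _ => rfl,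
    sum_image fun _ _ _ _ h => congrArg Prod.fst h]
  simp [show ∀ x, c x x = 0 from hse]

end Matching

section Script

variable {α : Type}

theorem mapCost_eq_matchingCost (c : Cost α) (F G : Forest α) (M : Finset (ℕ × ℕ)) :
    mapCost c F G M = matchingCost c (labels F) (labels G) M := by
  simp only [mapCost, matchingCost, labelAt_eq_getElem?, length_labels]

theorem IsPartialMatching.stepMap {m : ℕ} {H : Forest α} {M : Finset (ℕ × ℕ)}
    (hM : IsPartialMatching m (fsize H) M) (e : Edit α) :
    IsPartialMatching m (fsize (e.apply H)) (stepMap H e M) := by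
  by_cases h : e.apply H = H
  · rwa [TED.stepMap.eq_def, if_pos h, h]
  rw [TED.stepMap.eq_def, if_neg h]
  cases e with
  | rep i y =>
    dsimp only
    obtain ⟨-, hlab⟩ := labels_applyRep_of_ne h
    rwa [Edit.apply, ← length_labels, hlab, List.length_set, length_labels]
  | del i =>
    dsimp only
    obtain ⟨hi, hlab⟩ := labels_applyDel_of_ne h
    rw [filter_union_image_eq_eraseSnd, Edit.apply, ← length_labels, hlab,
      List.length_eraseIdx_of_lt (by rw [length_labels]; simp at hi; omega), length_labels]
    exact hM.eraseSnd hi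
  | ins i y l r =>
    dsimp only
    obtain ⟨hpos, hlab⟩ := labels_applyIns y l r i H h
    rw [filter_union_image_eq_insertSnd, Edit.apply, ← length_labels, hlab,
      List.length_insertIdx_of_le_length (by rw [length_labels]; simp at hpos; omega),
      length_labels]
    exact hM.insertSnd _

theorem matchingCost_stepMap_le (c : Cost α) (hse : SelfEq c) (htr : Triangle c) (K : List α)
    {H : Forest α} {M : Finset (ℕ × ℕ)} (hM : IsPartialMatching K.length (fsize H) M)
    (e : Edit α) :
    matchingCost c K (labels (e.apply H)) (stepMap H e M)
      ≤ matchingCost c K (labels H) M + editCost c e H := by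
  rw [← length_labels] at hM
  by_cases h : e.apply H = H
  · rw [TED.stepMap.eq_def, editCost.eq_def, if_pos h, if_pos h, h, add_zero]
  rw [TED.stepMap.eq_def, editCost.eq_def, if_neg h, if_neg h]
  cases e with
  | rep i y =>
    dsimp only
    obtain ⟨hi, hlab⟩ := labels_applyRep_of_ne h
    rw [Edit.apply, hlab, labelAt_eq_getElem?]
    exact matchingCost_set_le c hse htr K _ hM (by rwa [length_labels]) y
  | del i =>
    dsimp only
    obtain ⟨hi, hlab⟩ := labels_applyDel_of_ne h
    rw [filter_union_image_eq_eraseSnd, Edit.apply, hlab, labelAt_eq_getElem?]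
    exact matchingCost_eraseIdx_le c hse htr K _ hM (by rwa [length_labels])
  | ins i y l r =>
    dsimp only
    obtain ⟨hpos, hlab⟩ := labels_applyIns y l r i H h
    rw [filter_union_image_eq_insertSnd, Edit.apply, hlab,
      matchingCost_insertIdx c K _ hM (by rwa [length_labels])]

theorem matchingCost_foldl_stepMap_le (c : Cost α) (hse : SelfEq c) (htr : Triangle c)
    (K : List α) : ∀ (δ : List (Edit α)) (H : Forest α) (M : Finset (ℕ × ℕ)),
      IsPartialMatching K.length (fsize H) M →
      matchingCost c K (labels (applyScript δ H))
          (δ.foldl (fun st e => (e.apply st.1, stepMap st.1 e st.2)) (H, M)).2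
        ≤ matchingCost c K (labels H) M + scriptCost c δ H
  | [], H, M, _ => by simp [applyScript, scriptCost]
  | e :: δ, H, M, hM => by
      have hstep := matchingCost_stepMap_le c hse htr K hM e
      have ih := matchingCost_foldl_stepMap_le c hse htr K δ _ _ (hM.stepMap e)
      rw [applyScript, List.foldl_cons, List.foldl_cons, scriptCost]
      exact ih.trans (by linarith)

end Script

/-- If the cost function `c` is non-negative, self-equal and conforms
to the triangular inequality, then for every edit script `δ̄` with `δ̄(X) = Y`, the
corresponding tree mapping `M_δ̄` is at most as expensive as the script:
`c(M_δ̄, X, Y) ≤ c(δ̄, X)`. -/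
theorem mapOfScript_cost_le {α : Type} (c : Cost α) (hnn : Nonneg c) (hse : SelfEq c)
    (htr : Triangle c) (F G : Forest α) (δ : List (Edit α)) (h : applyScript δ F = G) :
    mapCost c F G (mapOfScript δ F) ≤ scriptCost c δ F := by
  subst h
  have hfold := matchingCost_foldl_stepMap_le c hse htr (labels F) δ F _
    (by rw [length_labels]; exact isPartialMatching_diag _)
  rw [← length_labels, matchingCost_diag c hse, zero_add, length_labels] at hfold
  rwa [mapCost_eq_matchingCost, mapOfScript]

end TED
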